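/- For paths u,v,x,y in E with r(u)=r(v) and r(x)=r(y), J_{uv⁻¹} ≤_J J_{xy⁻¹} holds in G(E) if and only if there is a path t in E with s(t) = r(x) and r(t) = r(u). -/

import Mathlib

universe u

/-- A directed graph: vertices, edges, source and range maps. -/
structure DGraph : Type (u + 1) where
  V : Type u
  Ed : Type u
  src : Ed → V
  rng : Ed → V

/-- The end vertex of a list of edges started at `v` (ignoring composability). -/
def DGraph.ranAux (G : DGraph) : G.V → List G.Ed → G.V
  | v, [] => v
  | _, e :: es => DGraph.ranAux G (G.rng e) es

/-- The edges `l` form a composable path starting at `v`. -/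
def DGraph.Chain (G : DGraph) : G.V → List G.Ed → Prop
  | _, [] => True
  | v, e :: es => G.src e = v ∧ DGraph.Chain G (G.rng e) es

theorem DGraph.ranAux_append (G : DGraph) (v : G.V) (l1 l2 : List G.Ed) :
    G.ranAux v (l1 ++ l2) = G.ranAux (G.ranAux v l1) l2 := by
  induction l1 generalizing v with
  | nil => rfl
  | cons e es ih => exact ih (G.rng e)

theorem DGraph.chain_append (G : DGraph) {v : G.V} {l1 l2 : List G.Ed}
    (h1 : G.Chain v l1) (h2 : G.Chain (G.ranAux v l1) l2) : G.Chain v (l1 ++ l2) := by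
  induction l1 generalizing v with
  | nil => exact h2
  | cons e es ih => exact ⟨h1.1, ih h1.2 h2⟩

theorem DGraph.chain_append_right (G : DGraph) {v : G.V} {l1 l2 : List G.Ed}
    (h : G.Chain v (l1 ++ l2)) : G.Chain (G.ranAux v l1) l2 := by
  induction l1 generalizing v with
  | nil => exact h
  | cons e es ih => exact ih h.2

/-- A (finite, directed) path in the graph `G`: a start vertex together
with a composable list of edges. Vertices are the paths of length `0`. -/
structure GPath (G : DGraph.{u}) : Type u where
  start : G.V
  edges : List G.Ed
  chain : G.Chain start edges

namespace GPath

variable {G : DGraph}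

/-- The range (end vertex) of a path. -/
def ran (p : GPath G) : G.V := G.ranAux p.start p.edges

/-- The path of length zero at a vertex. -/
def ofVertex (G : DGraph) (v : G.V) : GPath G := ⟨v, [], trivial⟩

/-- The path of length one given by an edge. -/
def ofEdge (G : DGraph) (e : G.Ed) : GPath G := ⟨G.src e, [e], ⟨rfl, trivial⟩⟩

@[simp] theorem ofVertex_ran (G : DGraph) (v : G.V) : (ofVertex G v).ran = v := rfl

@[simp] theorem ofEdge_ran (G : DGraph) (e : G.Ed) : (ofEdge G e).ran = G.rng e := rfl

/-- Concatenation of composable paths. -/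
def append (p q : GPath G) (h : p.ran = q.start) : GPath G :=
  ⟨p.start, p.edges ++ q.edges,
    G.chain_append p.chain (by
      show G.Chain (G.ranAux p.start p.edges) q.edges
      have : G.ranAux p.start p.edges = q.start := h
      rw [this]; exact q.chain)⟩

@[simp] theorem append_ran (p q : GPath G) (h : p.ran = q.start) :
    (p.append q h).ran = q.ran := by
  show G.ranAux p.start (p.edges ++ q.edges) = q.ran
  rw [G.ranAux_append]
  have : G.ranAux p.start p.edges = q.start := h
  rw [this]; rfl

/-- `y` is an initial segment of the path `p`. -/
def IsPrefixOf (y p : GPath G) : Prop := y.start = p.start ∧ y.edges <+: p.edges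

/-- The remainder `t` of `p` after its initial segment `y`, so that `p = y ++ t`. -/
def remainder (y p : GPath G) (h : y.IsPrefixOf p) : GPath G :=
  ⟨y.ran, p.edges.drop y.edges.length, by
    obtain ⟨l2, hl⟩ := h.2
    rw [← hl, List.drop_left]
    show G.Chain (G.ranAux y.start y.edges) l2
    rw [h.1]
    exact G.chain_append_right (v := p.start) (l1 := y.edges) (l2 := l2)
      (by rw [hl]; exact p.chain)⟩

@[simp] theorem remainder_ran (y p : GPath G) (h : y.IsPrefixOf p) :
    (y.remainder p h).ran = p.ran := by
  obtain ⟨l2, hl⟩ := h.2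
  show G.ranAux y.ran (p.edges.drop y.edges.length) = p.ran
  rw [← hl, List.drop_left]
  show G.ranAux (G.ranAux y.start y.edges) l2 = p.ran
  rw [h.1, ← G.ranAux_append, hl]
  rfl

end GPath

/-- The graph inverse semigroup of `G` (in normal form): its elements are zero together
with the elements `x * y⁻¹` for paths `x`, `y` with the same range. -/
inductive GIS (G : DGraph.{u}) : Type u where
  | zero : GIS G
  | mk (x y : GPath G) (h : x.ran = y.ran) : GIS G

instance (G : DGraph) : Zero (GIS G) := ⟨GIS.zero⟩

open scoped Classical in
/-- Multiplication in the graph inverse semigroup. -/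
noncomputable def GIS.gmul {G : DGraph} : GIS G → GIS G → GIS G
  | GIS.zero, _ => GIS.zero
  | GIS.mk _ _ _, GIS.zero => GIS.zero
  | GIS.mk x y hxy, GIS.mk p q hpq =>
    if h1 : y.IsPrefixOf p then
      GIS.mk (x.append (y.remainder p h1) hxy) q
        (by exact (GPath.append_ran x _ hxy).trans ((GPath.remainder_ran y p h1).trans hpq))
    else if h2 : p.IsPrefixOf y then
      GIS.mk x (q.append (p.remainder y h2) hpq.symm)
        (by exact hxy.trans ((GPath.remainder_ran p y h2).symm.trans (GPath.append_ran q _ hpq.symm).symm))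
    else GIS.zero

noncomputable instance (G : DGraph) : Mul (GIS G) := ⟨GIS.gmul⟩

/-- The element of `GIS G` corresponding to a vertex `v` (i.e. `v = v * v⁻¹`). -/
def vertexEl (G : DGraph) (v : G.V) : GIS G :=
  GIS.mk (GPath.ofVertex G v) (GPath.ofVertex G v) rfl

/-- The element of `GIS G` corresponding to an edge `e` (i.e. `e = e * r(e)⁻¹`). -/
def edgeEl (G : DGraph) (e : G.Ed) : GIS G :=
  GIS.mk (GPath.ofEdge G e) (GPath.ofVertex G (G.rng e)) rfl

/-- The inverse operation on `GIS G`: `(x y⁻¹)⁻¹ = y x⁻¹`. -/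
def GIS.inv {G : DGraph} : GIS G → GIS G
  | GIS.zero => GIS.zero
  | GIS.mk x y h => GIS.mk y x h.symm

/-- `a` lies in the principal left ideal generated by `b` (`S¹a ⊆ S¹b`). -/
def GreenLeL {G : DGraph} (a b : GIS G) : Prop := a = b ∨ ∃ c, a = c * b

/-- `a` lies in the principal right ideal generated by `b` (`aS¹ ⊆ bS¹`). -/
def GreenLeR {G : DGraph} (a b : GIS G) : Prop := a = b ∨ ∃ c, a = b * c

/-- `a` lies in the principal two-sided ideal generated by `b` (`S¹aS¹ ⊆ S¹bS¹`). -/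
def GreenLeJ {G : DGraph} (a b : GIS G) : Prop :=
  a = b ∨ (∃ c, a = c * b) ∨ (∃ c, a = b * c) ∨ (∃ c d, a = c * b * d)

/-- Green's `L`-relation. -/
def GreenEqL {G : DGraph} (a b : GIS G) : Prop := GreenLeL a b ∧ GreenLeL b a

/-- Green's `R`-relation. -/
def GreenEqR {G : DGraph} (a b : GIS G) : Prop := GreenLeR a b ∧ GreenLeR b a

/-- Green's `J`-relation. -/
def GreenEqJ {G : DGraph} (a b : GIS G) : Prop := GreenLeJ a b ∧ GreenLeJ b a

/-- There is a (possibly trivial) directed path from `v` to `w` in `G`. -/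
def GConnected (G : DGraph) (v w : G.V) : Prop := ∃ t : GPath G, t.start = v ∧ t.ran = w

/-- `I` is a (two-sided) ideal of `GIS G`. -/
def GISIdeal {G : DGraph} (I : Set (GIS G)) : Prop :=
  ∀ a ∈ I, ∀ c : GIS G, a * c ∈ I ∧ c * a ∈ I

/-- `R` is the Rees congruence of some ideal `I`, i.e. `R = (I × I) ∪ Δ`. -/
def IsReesCon {G : DGraph} (R : Con (GIS G)) : Prop :=
  ∃ I : Set (GIS G), GISIdeal I ∧ ∀ a b : GIS G, R a b ↔ (a ∈ I ∧ b ∈ I) ∨ a = b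

/-- The only congruences on `GIS G` are the universal one and the diagonal. -/
def CongFree (G : DGraph) : Prop :=
  ∀ R : Con (GIS G), (∀ a b : GIS G, R a b) ∨ (∀ a b : GIS G, R a b ↔ a = b)

/-- The natural partial order on the inverse semigroup `GIS G`:
`a ≤ b` iff `a = ε * b` for some idempotent `ε`. -/
def natLe {G : DGraph} (a b : GIS G) : Prop := ∃ ε : GIS G, ε * ε = ε ∧ a = ε * b

/-- The graph obtained from `G` by deleting the vertices in `S` and all
edges incident to them. -/
def DGraph.delete (G : DGraph) (S : Set G.V) : DGraph where
  V := {v : G.V // v ∉ S}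
  Ed := {e : G.Ed // G.src e ∉ S ∧ G.rng e ∉ S}
  src e := ⟨G.src e.1, e.2.1⟩
  rng e := ⟨G.rng e.1, e.2.2⟩

/-- The graph with a single vertex and `n` loops; its graph inverse semigroup
is the polycyclic monoid `Pₙ`. -/
def polyGraph (n : ℕ) : DGraph :=
  ⟨PUnit, Fin n, fun _ => PUnit.unit, fun _ => PUnit.unit⟩

/-
The elements `0` and `a b⁻¹` with `r(a)` reachable from `r(x)` form an ideal of `G(E)` containing
`x y⁻¹`, so every element of the ideal generated by `x y⁻¹` has this form. Conversely, a path `t`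
from `r(x)` to `r(u)` gives `u v⁻¹ = (u (x t)⁻¹) (x y⁻¹) ((y t) v⁻¹)`.
-/

@[ext] theorem GPath.ext {G : DGraph} {p q : GPath G} (hstart : p.start = q.start)
    (hedges : p.edges = q.edges) : p = q := by
  cases p; cases q
  subst hstart hedges
  rfl

theorem GIS.mk_congr {G : DGraph} {x₁ y₁ x₂ y₂ : GPath G} (hx : x₁ = x₂) (hy : y₁ = y₂)
    {h₁ : x₁.ran = y₁.ran} {h₂ : x₂.ran = y₂.ran} :
    GIS.mk x₁ y₁ h₁ = GIS.mk x₂ y₂ h₂ := by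
  subst hx hy
  rfl

namespace GPath

variable {G : DGraph}

theorem isPrefixOf_refl (p : GPath G) : p.IsPrefixOf p := ⟨rfl, List.prefix_refl _⟩

theorem isPrefixOf_append (p q : GPath G) (h : p.ran = q.start) : p.IsPrefixOf (p.append q h) :=
  ⟨rfl, List.prefix_append _ _⟩

theorem IsPrefixOf.antisymm {p q : GPath G} (hpq : p.IsPrefixOf q) (hqp : q.IsPrefixOf p) :
    p = q :=
  GPath.ext hpq.1 (hpq.2.eq_of_length (Nat.le_antisymm hpq.2.length_le hqp.2.length_le))

theorem append_remainder_self (x y : GPath G) (h : x.ran = (y.remainder y y.isPrefixOf_refl).start) :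
    x.append (y.remainder y y.isPrefixOf_refl) h = x :=
  GPath.ext rfl (by simp [append, remainder])

theorem remainder_append (p q : GPath G) (h : p.ran = q.start) :
    p.remainder (p.append q h) (p.isPrefixOf_append q h) = q :=
  GPath.ext h (by simp [append, remainder])

end GPath

namespace GConnected

variable {G : DGraph}

theorem refl (v : G.V) : GConnected G v v := ⟨GPath.ofVertex G v, rfl, rfl⟩

theorem trans {u v w : G.V} (huv : GConnected G u v) (hvw : GConnected G v w) :
    GConnected G u w := by
  obtain ⟨s, rfl, rfl⟩ := huv
  obtain ⟨t, hts, rfl⟩ := hvw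
  exact ⟨s.append t hts.symm, rfl, GPath.append_ran s t hts.symm⟩

theorem ran_append (p q : GPath G) (h : p.ran = q.start) :
    GConnected G p.ran (p.append q h).ran :=
  ⟨q, h.symm, (GPath.append_ran p q h).symm⟩

theorem ran_remainder {y p : GPath G} (h : y.IsPrefixOf p) : GConnected G y.ran p.ran :=
  ⟨y.remainder p h, rfl, GPath.remainder_ran y p h⟩

end GConnected

namespace GIS

variable {G : DGraph}

open scoped Classical in
theorem mk_mul_mk (x y : GPath G) (hxy : x.ran = y.ran) (p q : GPath G) (hpq : p.ran = q.ran) :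
    GIS.mk x y hxy * GIS.mk p q hpq =
      if h₁ : y.IsPrefixOf p then
        GIS.mk (x.append (y.remainder p h₁) hxy) q
          ((GPath.append_ran x _ hxy).trans ((GPath.remainder_ran y p h₁).trans hpq))
      else if h₂ : p.IsPrefixOf y then
        GIS.mk x (q.append (p.remainder y h₂) hpq.symm)
          (hxy.trans ((GPath.remainder_ran p y h₂).symm.trans
            (GPath.append_ran q _ hpq.symm).symm))
      else GIS.zero := rfl

theorem mk_mul_mk_of_isPrefixOf {x y p q : GPath G} (hxy : x.ran = y.ran) (hpq : p.ran = q.ran)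
    (h : y.IsPrefixOf p) :
    GIS.mk x y hxy * GIS.mk p q hpq =
      GIS.mk (x.append (y.remainder p h) hxy) q
        ((GPath.append_ran x _ hxy).trans ((GPath.remainder_ran y p h).trans hpq)) := by
  rw [mk_mul_mk, dif_pos h]

/-- If `y` is also a prefix of `p`, then `y = p` and the first branch of the multiplication gives
the same result. -/
theorem mk_mul_mk_of_isPrefixOf' {x y p q : GPath G} (hxy : x.ran = y.ran) (hpq : p.ran = q.ran)
    (h : p.IsPrefixOf y) :
    GIS.mk x y hxy * GIS.mk p q hpq =
      GIS.mk x (q.append (p.remainder y h) hpq.symm)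
        (hxy.trans ((GPath.remainder_ran p y h).symm.trans
          (GPath.append_ran q _ hpq.symm).symm)) := by
  rw [mk_mul_mk]
  split_ifs with h'
  · obtain rfl := h'.antisymm h
    exact mk_congr (GPath.append_remainder_self _ _ _) (GPath.append_remainder_self _ _ _).symm
  · rfl

theorem mk_mul_mk_self (a w q : GPath G) (haw : a.ran = w.ran) (hwq : w.ran = q.ran) :
    GIS.mk a w haw * GIS.mk w q hwq = GIS.mk a q (haw.trans hwq) := by
  rw [mk_mul_mk_of_isPrefixOf _ _ w.isPrefixOf_refl]
  exact mk_congr (GPath.append_remainder_self _ _ _) rfl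

theorem mul_zero (c : GIS G) : c * 0 = 0 := by
  cases c <;> rfl

def IsReachableFrom (v : G.V) : GIS G → Prop
  | GIS.zero => True
  | GIS.mk a _ _ => GConnected G v a.ran

theorem IsReachableFrom.of_connected {v w : G.V} {s : GIS G} (hvw : GConnected G v w)
    (hs : s.IsReachableFrom w) : s.IsReachableFrom v := by
  cases s with
  | zero => trivial
  | mk a b h => exact hvw.trans hs

theorem mk_mul_isReachableFrom (x y : GPath G) (hxy : x.ran = y.ran) (c : GIS G) :
    (GIS.mk x y hxy * c).IsReachableFrom x.ran := by
  cases c with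
  | zero => trivial
  | mk p q hpq =>
    rw [mk_mul_mk]
    split_ifs
    · exact GConnected.ran_append _ _ _
    · exact GConnected.refl _
    · trivial

theorem mul_mk_isReachableFrom (c : GIS G) (x y : GPath G) (hxy : x.ran = y.ran) :
    (c * GIS.mk x y hxy).IsReachableFrom x.ran := by
  cases c with
  | zero => trivial
  | mk p q hpq =>
    rw [mk_mul_mk]
    split_ifs with h₁ h₂
    · exact ⟨GPath.ofVertex G x.ran, rfl,
        ((GPath.append_ran p _ hpq).trans (GPath.remainder_ran q x h₁)).symm⟩
    · show GConnected G x.ran p.ran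
      exact hpq ▸ GConnected.ran_remainder h₂
    · trivial

theorem isIdeal_setOf_isReachableFrom (v : G.V) : GISIdeal {s : GIS G | s.IsReachableFrom v} := by
  intro s hs c
  cases s with
  | zero => exact ⟨trivial, (mul_zero c).symm ▸ trivial⟩
  | mk a b h =>
    exact ⟨(mk_mul_isReachableFrom a b h c).of_connected hs,
      (mul_mk_isReachableFrom c a b h).of_connected hs⟩

end GIS

theorem GISIdeal.mem_of_greenLeJ {G : DGraph} {I : Set (GIS G)} (hI : GISIdeal I) {a b : GIS G}
    (hb : b ∈ I) (hab : GreenLeJ a b) : a ∈ I := by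
  rcases hab with rfl | ⟨c, rfl⟩ | ⟨c, rfl⟩ | ⟨c, d, rfl⟩
  · exact hb
  · exact (hI b hb c).2
  · exact (hI b hb c).1
  · exact (hI _ (hI b hb c).2 d).1

theorem GIS.greenLeJ_mk_mk_of_connected {G : DGraph} {u v x y : GPath G} (hu : u.ran = v.ran)
    (hx : x.ran = y.ran) (h : GConnected G x.ran u.ran) :
    GreenLeJ (GIS.mk u v hu) (GIS.mk x y hx) := by
  obtain ⟨t, hts, htr⟩ := h
  have hxt : x.ran = t.start := hts.symm
  have hyt : y.ran = t.start := hx ▸ hxt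
  have hut : u.ran = (y.append t hyt).ran := by rw [GPath.append_ran, htr]
  refine Or.inr <| Or.inr <| Or.inr ⟨GIS.mk u (x.append t hxt) (by rw [GPath.append_ran, htr]),
    GIS.mk (y.append t hyt) v (hut.symm.trans hu), ?_⟩
  rw [GIS.mk_mul_mk_of_isPrefixOf' _ _ (x.isPrefixOf_append t hxt),
    ← GIS.mk_mul_mk_self u (y.append t hyt) v hut (hut.symm.trans hu)]
  congr 1
  refine GIS.mk_congr rfl ?_
  exact GPath.ext rfl (congrArg (y.edges ++ GPath.edges ·) (GPath.remainder_append x t hxt).symm)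

/-- For paths `u,v,x,y` with `r(u)=r(v)` and `r(x)=r(y)`,
`J_{uv⁻¹} ≤_J J_{xy⁻¹}` in `G(E)` iff there is a path `t` with `s(t) = r(x)` and
`r(t) = r(u)`. -/
theorem stmt4 (G : DGraph) (u v x y : GPath G) (hu : u.ran = v.ran) (hx : x.ran = y.ran) :
    GreenLeJ (GIS.mk u v hu) (GIS.mk x y hx) ↔
      ∃ t : GPath G, t.start = x.ran ∧ t.ran = u.ran :=
  ⟨(GIS.isIdeal_setOf_isReachableFrom x.ran).mem_of_greenLeJ (GConnected.refl x.ran),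
    GIS.greenLeJ_mk_mk_of_connected hu hx⟩
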